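/- arXiv:2602.08802 — 2 statements merged into one kernel-verified Lean document; each statement's English description precedes it below -/
import Mathlib

section
/- Let G ≤ Sym(X) be a transitive permutation group on a finite set X with a normal block system 𝓑, let N = fix_G(𝓑), fix a block B₀ ∈ 𝓑, and suppose T = Soc(N^{B₀}), the socle of the permutation group induced by N on B₀, is a transitive nonabelian simple group. Then an element g ∈ N belongs to Soc(N) if and only if for every block B ∈ 𝓑 the induced permutation g^B belongs to Soc(N^B). -/
open Equiv Pointwise

section PermGroupDefs

variable {Y : Type*}

/-- A subgroup of `Equiv.Perm Y` is transitive if it acts transitively on `Y`. -/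
def SubTrans (G : Subgroup (Equiv.Perm Y)) : Prop :=
  ∀ x y : Y, ∃ g ∈ G, g x = y

/-- A subgroup of `Equiv.Perm Y` is semiregular if only its identity fixes a point. -/
def SubSemiregular (H : Subgroup (Equiv.Perm Y)) : Prop :=
  ∀ h ∈ H, (∃ x : Y, h x = x) → h = 1

/-- A subgroup of `Equiv.Perm Y` is regular if it is transitive and semiregular. -/
def SubRegular (H : Subgroup (Equiv.Perm Y)) : Prop :=
  SubTrans H ∧ SubSemiregular H

/-- Two-transitivity. -/
def Sub2Trans (G : Subgroup (Equiv.Perm Y)) : Prop :=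
  ∀ x₁ x₂ y₁ y₂ : Y, x₁ ≠ x₂ → y₁ ≠ y₂ → ∃ g ∈ G, g x₁ = y₁ ∧ g x₂ = y₂

/-- Orbit of a point under a subgroup of `Equiv.Perm Y`. -/
def SubOrbit (H : Subgroup (Equiv.Perm Y)) (x : Y) : Set Y :=
  {y | ∃ h ∈ H, h x = y}

/-- The set of orbits of a subgroup of `Equiv.Perm Y`. -/
def SubOrbits (H : Subgroup (Equiv.Perm Y)) : Set (Set Y) :=
  Set.range (SubOrbit H)

/-- A block for a subgroup of `Equiv.Perm Y`. -/
def SubIsBlock (G : Subgroup (Equiv.Perm Y)) (B : Set Y) : Prop :=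
  ∀ g ∈ G, (g : Equiv.Perm Y) '' B = B ∨ Disjoint ((g : Equiv.Perm Y) '' B) B

/-- Primitivity: transitive and the only blocks are trivial. -/
def SubPrimitive (G : Subgroup (Equiv.Perm Y)) : Prop :=
  SubTrans G ∧ ∀ B : Set Y, B.Nonempty → SubIsBlock G B → B = Set.univ ∨ ∃ x, B = {x}

/-- A block system: a `G`-invariant partition of `Y`. -/
def IsBlockSystem (G : Subgroup (Equiv.Perm Y)) (P : Set (Set Y)) : Prop :=
  (∀ B ∈ P, B.Nonempty) ∧ (∀ x : Y, ∃! B : Set Y, B ∈ P ∧ x ∈ B) ∧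
    (∀ g ∈ G, ∀ B ∈ P, (g : Equiv.Perm Y) '' B ∈ P)

/-- A normal block system: the set of orbits of a normal subgroup. -/
def IsNormalBlockSystem (G : Subgroup (Equiv.Perm Y)) (P : Set (Set Y)) : Prop :=
  IsBlockSystem G P ∧
    ∃ N : Subgroup (Equiv.Perm Y), N ≤ G ∧ (∀ g ∈ G, ∀ x ∈ N, g * x * g⁻¹ ∈ N) ∧
      P = SubOrbits N

/-- `P` refines `Q`: every block of `P` is contained in a block of `Q`. -/
def Refines (P Q : Set (Set Y)) : Prop :=
  ∀ B ∈ P, ∃ C ∈ Q, B ⊆ C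

/-- The partition of `Y` into singletons. -/
def SingletonPartition (Y : Type*) : Set (Set Y) :=
  Set.range fun x : Y => ({x} : Set Y)

/-- A minimal (nontrivial) block system. -/
def IsMinimalBlockSystem (G : Subgroup (Equiv.Perm Y)) (P : Set (Set Y)) : Prop :=
  IsBlockSystem G P ∧ P ≠ SingletonPartition Y ∧
    ∀ Q : Set (Set Y), IsBlockSystem G Q → Refines Q P →
      Q = SingletonPartition Y ∨ Q = P

/-- `fix_G(P)`: elements of `G` stabilizing every block of `P` setwise. -/
def FixBlocks (G : Subgroup (Equiv.Perm Y)) (P : Set (Set Y)) : Subgroup (Equiv.Perm Y) :=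
  G ⊓ ⨅ B ∈ P, MulAction.stabilizer (Equiv.Perm Y) B

/-- The pointwise stabilizer of a set, inside the full symmetric group. -/
def PointStab (A : Set Y) : Subgroup (Equiv.Perm Y) :=
  ⨅ a ∈ A, MulAction.stabilizer (Equiv.Perm Y) a

/-- The support of a subgroup of `Equiv.Perm Y`. -/
def SubSupp (H : Subgroup (Equiv.Perm Y)) : Set Y :=
  {y | ∃ h ∈ H, h y ≠ y}

/-- `N` is a normal subgroup of the subgroup `H`. -/
def NormalIn {G : Type*} [Group G] (H N : Subgroup G) : Prop :=
  N ≤ H ∧ ∀ h ∈ H, ∀ x ∈ N, h * x * h⁻¹ ∈ N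

/-- `N` is a minimal normal subgroup of the subgroup `H`. -/
def MinimalNormalIn {G : Type*} [Group G] (H N : Subgroup G) : Prop :=
  NormalIn H N ∧ N ≠ ⊥ ∧ ∀ M : Subgroup G, NormalIn H M → M ≤ N → M = ⊥ ∨ M = N

/-- The socle of a subgroup `H`: the subgroup generated by the minimal
normal subgroups of `H`. -/
def SocleIn {G : Type*} [Group G] (H : Subgroup G) : Subgroup G :=
  ⨆ N ∈ {N : Subgroup G | MinimalNormalIn H N}, N

/-- The conjugate subgroup `g⁻¹ H g`. -/
def ConjSub {G : Type*} [Group G] (g : G) (H : Subgroup G) : Subgroup G :=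
  Subgroup.map (MulAut.conj g⁻¹).toMonoidHom H

/-- The permutation of an invariant set induced by an element of its setwise stabilizer. -/
def restrictHom {G Y : Type*} [Group G] [MulAction G Y] (A : Set Y) :
    MulAction.stabilizer G A →* Equiv.Perm A where
  toFun g := (MulAction.toPerm (g : G)).subtypePerm (fun y => by
    have hA : (g : G) • A = A := MulAction.mem_stabilizer_iff.mp g.2
    constructor
    · intro hy
      have : (g : G) • y ∈ (g : G) • A := by rw [hA]; exact hy
      exact Set.smul_mem_smul_set_iff.mp this
    · intro hy
      have : (g : G) • y ∈ (g : G) • A := Set.smul_mem_smul_set hy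
      rw [hA] at this
      exact this)
  map_one' := by
    ext x
    simp [Equiv.Perm.subtypePerm]
  map_mul' g h := by
    ext x
    simp [Equiv.Perm.subtypePerm, mul_smul]

/-- The permutation group induced on an invariant set `A` by (the setwise stabilizer of `A`
in) a subgroup `H`. -/
def InducedSub {G Y : Type*} [Group G] [MulAction G Y] (H : Subgroup G) (A : Set Y) :
    Subgroup (Equiv.Perm A) :=
  Subgroup.map (restrictHom A) (H.comap (MulAction.stabilizer G A).subtype)

end PermGroupDefs

section ClassR

/-- The class `𝓡` of groups from Definition 1.7. -/
def IsClassRGroup (R : Type*) [Group R] : Prop :=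
  ∃ n : ℕ, 0 < n ∧ Odd n ∧ Squarefree n ∧
    (Nonempty (R ≃* Multiplicative (ZMod n)) ∨
     Nonempty (R ≃* Multiplicative (ZMod n × ZMod 2)) ∨
     Nonempty (R ≃* Multiplicative (ZMod n × ZMod 2 × ZMod 2)) ∨
     Nonempty (R ≃* Multiplicative (ZMod n × ZMod 2 × ZMod 2 × ZMod 2)) ∨
     Nonempty (R ≃* Multiplicative (ZMod n × ZMod 2 × ZMod 2 × ZMod 2 × ZMod 2)) ∨
     Nonempty (R ≃* Multiplicative (ZMod n × ZMod 4)) ∨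
     Nonempty (R ≃* Multiplicative (ZMod n) × QuaternionGroup 2) ∨
     (∃ o : ℕ, (o = 2 ∨ o = 4 ∨ o = 8) ∧
       ∃ ψ : Multiplicative (ZMod o) →* MulAut (Multiplicative (ZMod n)),
         ψ (Multiplicative.ofAdd 1) ≠ 1 ∧ ψ (Multiplicative.ofAdd 1) ^ 2 = 1 ∧
         Nonempty (R ≃* Multiplicative (ZMod n) ⋊[ψ] Multiplicative (ZMod o))))

end ClassR

section CI

/-- `σ` is an isomorphism between the ternary relational structures `R` and `S`. -/
def TernaryIso {X I : Type*} (R S : I → Set (X × X × X)) (σ : Equiv.Perm X) : Prop :=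
  ∀ i, (fun t : X × X × X => (σ t.1, σ t.2.1, σ t.2.2)) '' R i = S i

/-- A ternary relational structure on a group `G` is a Cayley object if all left
translations are automorphisms. -/
def CayleyTernary (G : Type*) [Group G] {I : Type*} (R : I → Set (G × G × G)) : Prop :=
  ∀ g : G, TernaryIso R R (Equiv.mulLeft g)

/-- `G` is a CI-group with respect to ternary relational structures. -/
def IsTernaryCI (G : Type*) [Group G] : Prop :=
  ∀ (I : Type) (R S : I → Set (G × G × G)), CayleyTernary G R → CayleyTernary G S →
    (∃ σ : Equiv.Perm G, TernaryIso R S σ) →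
    ∃ φ : G ≃* G, TernaryIso R S φ.toEquiv

/-- `σ` is an isomorphism between the binary relational structures `R` and `S`. -/
def BinaryIso {X I : Type*} (R S : I → Set (X × X)) (σ : Equiv.Perm X) : Prop :=
  ∀ i, (fun t : X × X => (σ t.1, σ t.2)) '' R i = S i

/-- A binary relational structure on a group `G` is a Cayley object if all left
translations are automorphisms. -/
def CayleyBinary (G : Type*) [Group G] {I : Type*} (R : I → Set (G × G)) : Prop :=
  ∀ g : G, BinaryIso R R (Equiv.mulLeft g)

/-- `G` is a CI-group with respect to binary relational structures. -/
def IsBinaryCI (G : Type*) [Group G] : Prop :=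
  ∀ (I : Type) (R S : I → Set (G × G)), CayleyBinary G R → CayleyBinary G S →
    (∃ σ : Equiv.Perm G, BinaryIso R S σ) →
    ∃ φ : G ≃* G, BinaryIso R S φ.toEquiv

end CI

section Closure

/-- `σ` belongs to the `k`-closure of `G ≤ Sym(Y)`: it preserves every orbit of the
componentwise action of `G` on `Y^k`. -/
def InKClosure {Y : Type*} (k : ℕ) (G : Subgroup (Equiv.Perm Y)) (σ : Equiv.Perm Y) : Prop :=
  ∀ t : Fin k → Y, ∃ g ∈ G, ∀ i, σ (t i) = g (t i)

/-- `G` is `k`-closed. -/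
def IsKClosed {Y : Type*} (k : ℕ) (G : Subgroup (Equiv.Perm Y)) : Prop :=
  ∀ σ : Equiv.Perm Y, InKClosure k G σ → σ ∈ G

/-- The inner holomorph of `G`: the subgroup of `Sym(G)` generated by the left and right
regular representations. -/
def InnerHolomorph (G : Type*) [Group G] : Subgroup (Equiv.Perm G) :=
  Subgroup.closure
    ((Set.range fun g : G => Equiv.mulLeft g) ∪ (Set.range fun g : G => Equiv.mulRight g))

end Closure
section SocleLemmas

variable {Γ : Type*} {Γ' : Type*} [Group Γ] [Group Γ']

lemma socleIn_le (H : Subgroup Γ) : SocleIn H ≤ H :=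
  iSup₂_le fun _ hM => hM.1.1

lemma le_socleIn {H M : Subgroup Γ} (hM : MinimalNormalIn H M) : M ≤ SocleIn H :=
  le_iSup₂ (f := fun (N : Subgroup Γ) (_ : N ∈ {N : Subgroup Γ | MinimalNormalIn H N}) => N) M hM

lemma socleIn_induction {H : Subgroup Γ} {x : Γ} (hx : x ∈ SocleIn H)
    {C : Γ → Prop} (hmem : ∀ M, MinimalNormalIn H M → ∀ y ∈ M, C y)
    (h1 : C 1) (hmul : ∀ a b, C a → C b → C (a * b)) : C x := by
  refine Subgroup.iSup_induction (C := C)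
    (fun M : Subgroup Γ => ⨆ _ : MinimalNormalIn H M, M) (by exact hx) ?_ h1 hmul
  intro M y hy
  by_cases h : MinimalNormalIn H M
  · rw [iSup_pos h] at hy
    exact hmem M h y hy
  · rw [iSup_neg h, Subgroup.mem_bot] at hy
    subst hy; exact h1

lemma socleIn_normalIn (H : Subgroup Γ) : NormalIn H (SocleIn H) := by
  refine ⟨socleIn_le H, fun h hh x hx => ?_⟩
  refine socleIn_induction hx (C := fun y => h * y * h⁻¹ ∈ SocleIn H) ?_ (by simpa using (SocleIn H).one_mem) ?_
  · intro M hM y hy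
    exact le_socleIn hM (hM.1.2 h hh y hy)
  · intro a b ha hb
    have hh' : (h * a * h⁻¹) * (h * b * h⁻¹) = h * (a * b) * h⁻¹ := by group
    exact hh' ▸ mul_mem ha hb

lemma card_lt_of_subgroup_lt [Finite Γ] {K₁ K : Subgroup Γ} (h : K₁ < K) :
    Nat.card K₁ < Nat.card K := by
  have h' : (K₁ : Set Γ) ⊂ (K : Set Γ) := SetLike.coe_ssubset_coe.mpr h
  have := Set.ncard_lt_ncard h' (Set.toFinite _)
  rwa [← Nat.card_coe_set_eq, ← Nat.card_coe_set_eq] at this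

lemma exists_minimalNormalIn_le [Finite Γ] {H : Subgroup Γ} :
    ∀ (n : ℕ) (W : Subgroup Γ), Nat.card W ≤ n → NormalIn H W → W ≠ ⊥ →
      ∃ M, MinimalNormalIn H M ∧ M ≤ W := by
  intro n
  induction n with
  | zero =>
    intro W hc _ _
    exact absurd (Nat.le_zero.mp hc) Nat.card_pos.ne'
  | succ n ih =>
    intro W hc hW h0
    by_cases hmin : ∀ V : Subgroup Γ, NormalIn H V → V ≤ W → V = ⊥ ∨ V = W
    · exact ⟨W, ⟨hW, h0, hmin⟩, le_rfl⟩
    · push_neg at hmin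
      obtain ⟨V, hV, hVW, hV0, hVne⟩ := hmin
      have hlt := card_lt_of_subgroup_lt (lt_of_le_of_ne hVW hVne)
      obtain ⟨M, hM, hMV⟩ := ih V (by omega) hV hV0
      exact ⟨M, hM, hMV.trans hVW⟩

/-- Simplicity of a subgroup, phrased in ambient terms. -/
def AmbSimple (T : Subgroup Γ) : Prop :=
  ∀ W : Subgroup Γ, W ≤ T → (∀ t ∈ T, ∀ w ∈ W, t * w * t⁻¹ ∈ W) → W = ⊥ ∨ W = T

lemma ambSimple_of_isSimple {T : Subgroup Γ} (h : IsSimpleGroup T) : AmbSimple T := by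
  intro W hWT hconj
  haveI := h
  have hnorm : (W.subgroupOf T).Normal := by
    constructor
    intro n hn t
    rw [Subgroup.mem_subgroupOf] at hn ⊢
    simpa using hconj ↑t t.2 ↑n hn
  rcases IsSimpleGroup.eq_bot_or_eq_top_of_normal _ hnorm with h' | h'
  · left
    rw [eq_bot_iff]
    intro w hw
    have hmem : (⟨w, hWT hw⟩ : T) ∈ W.subgroupOf T := by
      rw [Subgroup.mem_subgroupOf]; exact hw
    rw [h', Subgroup.mem_bot] at hmem
    have : w = 1 := congrArg Subtype.val hmem
    simp [this]
  · right
    refine le_antisymm hWT fun t ht => ?_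
    have hmem : (⟨t, ht⟩ : T) ∈ W.subgroupOf T := h' ▸ Subgroup.mem_top _
    rwa [Subgroup.mem_subgroupOf] at hmem

lemma socle_le_of_normalIn [Finite Γ] {H : Subgroup Γ}
    (hA : AmbSimple (SocleIn H)) {W : Subgroup Γ}
    (hW : NormalIn H W) (h0 : W ≠ ⊥) : SocleIn H ≤ W := by
  obtain ⟨M, hM, hMW⟩ := exists_minimalNormalIn_le (Nat.card W) W le_rfl hW h0
  rcases hA M (le_socleIn hM) (fun t ht w hw => hM.1.2 t (socleIn_le H ht) w hw) with h | h
  · exact absurd h hM.2.1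
  · rw [← h]; exact hMW

end SocleLemmas

section MapLemmas

variable {Γ : Type*} {Γ' : Type*} [Group Γ] [Group Γ'] (e : Γ ≃* Γ')

lemma map_symm_map (K : Subgroup Γ) :
    Subgroup.map e.symm.toMonoidHom (Subgroup.map e.toMonoidHom K) = K := by
  rw [Subgroup.map_map]
  have h : e.symm.toMonoidHom.comp e.toMonoidHom = MonoidHom.id Γ := by ext x; simp
  rw [h, Subgroup.map_id]

lemma map_map_symm (K : Subgroup Γ') :
    Subgroup.map e.toMonoidHom (Subgroup.map e.symm.toMonoidHom K) = K := by
  have := map_symm_map e.symm K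
  simpa using this

lemma normalIn_map {H M : Subgroup Γ} (h : NormalIn H M) :
    NormalIn (Subgroup.map e.toMonoidHom H) (Subgroup.map e.toMonoidHom M) := by
  refine ⟨Subgroup.map_mono h.1, fun g hg x hx => ?_⟩
  rw [Subgroup.mem_map_equiv] at hg hx ⊢
  simpa using h.2 _ hg _ hx

lemma minimalNormalIn_map {H M : Subgroup Γ} (h : MinimalNormalIn H M) :
    MinimalNormalIn (Subgroup.map e.toMonoidHom H) (Subgroup.map e.toMonoidHom M) := by
  refine ⟨normalIn_map e h.1, ?_, ?_⟩
  · intro hb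
    apply h.2.1
    have := congrArg (Subgroup.map e.symm.toMonoidHom) hb
    rwa [map_symm_map, Subgroup.map_bot] at this
  · intro M' hM' hle
    have h1 : NormalIn H (Subgroup.map e.symm.toMonoidHom M') := by
      have := normalIn_map e.symm hM'
      rwa [map_symm_map] at this
    have h2 : Subgroup.map e.symm.toMonoidHom M' ≤ M := by
      have := Subgroup.map_mono (f := e.symm.toMonoidHom) hle
      rwa [map_symm_map] at this
    rcases h.2.2 _ h1 h2 with h3 | h3
    · left
      have := congrArg (Subgroup.map e.toMonoidHom) h3
      rwa [map_map_symm, Subgroup.map_bot] at this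
    · right
      have := congrArg (Subgroup.map e.toMonoidHom) h3
      rwa [map_map_symm] at this

lemma socleIn_map (H : Subgroup Γ) :
    SocleIn (Subgroup.map e.toMonoidHom H) = Subgroup.map e.toMonoidHom (SocleIn H) := by
  apply le_antisymm
  · apply iSup₂_le
    intro M' hM'
    have hmin : MinimalNormalIn H (Subgroup.map e.symm.toMonoidHom M') := by
      have := minimalNormalIn_map e.symm hM'
      rwa [map_symm_map] at this
    have : Subgroup.map e.toMonoidHom (Subgroup.map e.symm.toMonoidHom M')
        ≤ Subgroup.map e.toMonoidHom (SocleIn H) := Subgroup.map_mono (le_socleIn hmin)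
    rwa [map_map_symm] at this
  · rw [Subgroup.map_le_iff_le_comap]
    apply iSup₂_le
    intro M hM
    rw [← Subgroup.map_le_iff_le_comap]
    exact le_socleIn (minimalNormalIn_map e hM)

lemma ambSimple_map {T : Subgroup Γ} (h : AmbSimple T) :
    AmbSimple (Subgroup.map e.toMonoidHom T) := by
  intro W hWT hconj
  have h1 : Subgroup.map e.symm.toMonoidHom W ≤ T := by
    have := Subgroup.map_mono (f := e.symm.toMonoidHom) hWT
    rwa [map_symm_map] at this
  have h2 : ∀ t ∈ T, ∀ w ∈ Subgroup.map e.symm.toMonoidHom W,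
      t * w * t⁻¹ ∈ Subgroup.map e.symm.toMonoidHom W := by
    intro t ht w hw
    rw [Subgroup.mem_map_equiv] at hw ⊢
    simp only [MulEquiv.symm_symm] at hw ⊢
    have := hconj (e t) (Subgroup.mem_map_of_mem _ ht) (e w) hw
    simpa using this
  rcases h _ h1 h2 with h3 | h3
  · left
    have := congrArg (Subgroup.map e.toMonoidHom) h3
    rwa [map_map_symm, Subgroup.map_bot] at this
  · right
    have := congrArg (Subgroup.map e.toMonoidHom) h3
    rwa [map_map_symm] at this

end MapLemmas
section PermBlockLemmas

open Equiv MulAction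

variable {X : Type*}

lemma restrictHom_coe {A : Set X} (g : stabilizer (Equiv.Perm X) A) (x : A) :
    ((restrictHom A g x : A) : X) = (g : Equiv.Perm X) x := rfl

lemma restrictHom_inv_coe {A : Set X} (g : stabilizer (Equiv.Perm X) A) (x : A) :
    (((restrictHom A g)⁻¹ x : A) : X) = (g : Equiv.Perm X)⁻¹ x := by
  rw [← map_inv]
  rfl

lemma mem_inducedSub {H : Subgroup (Equiv.Perm X)} {A : Set X} {σ : Equiv.Perm A} :
    σ ∈ InducedSub H A ↔
      ∃ g : stabilizer (Equiv.Perm X) A, (g : Equiv.Perm X) ∈ H ∧ restrictHom A g = σ := by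
  constructor
  · rintro ⟨g, hg, rfl⟩
    exact ⟨g, hg, rfl⟩
  · rintro ⟨g, hg, rfl⟩
    exact ⟨g, hg, rfl⟩

lemma fixBlocks_le_stabilizer (G : Subgroup (Equiv.Perm X)) {𝓑 : Set (Set X)} {B : Set X}
    (hB : B ∈ 𝓑) : FixBlocks G 𝓑 ≤ stabilizer (Equiv.Perm X) B :=
  inf_le_right.trans (le_trans (iInf_le _ B) (iInf_le _ hB))

lemma stab_apply_mem {B : Set X} {n : Equiv.Perm X} (hn : n ∈ stabilizer (Equiv.Perm X) B)
    {x : X} (hx : x ∈ B) : n x ∈ B := by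
  have h : n • B = B := hn
  rw [← h]
  exact Set.smul_mem_smul_set hx

lemma fixBlocks_smul {G : Subgroup (Equiv.Perm X)} {𝓑 : Set (Set X)} {n : Equiv.Perm X}
    (hn : n ∈ FixBlocks G 𝓑) {B : Set X} (hB : B ∈ 𝓑) : n • B = B := by
  have h := (Subgroup.mem_inf.mp hn).2
  rw [Subgroup.mem_iInf] at h
  have h' := h B
  rw [Subgroup.mem_iInf] at h'
  exact h' hB

lemma fixBlocks_conj_mem {G : Subgroup (Equiv.Perm X)} {𝓑 : Set (Set X)}
    (h𝓑 : _root_.IsBlockSystem G 𝓑) {g n : Equiv.Perm X} (hg : g ∈ G) (hn : n ∈ FixBlocks G 𝓑) :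
    g * n * g⁻¹ ∈ FixBlocks G 𝓑 := by
  have hnG : n ∈ G := (Subgroup.mem_inf.mp hn).1
  refine Subgroup.mem_inf.mpr ⟨G.mul_mem (G.mul_mem hg hnG) (G.inv_mem hg),
    Subgroup.mem_iInf.mpr fun B => Subgroup.mem_iInf.mpr fun hB => ?_⟩
  show (g * n * g⁻¹) • B = B
  have h1 : g⁻¹ • B ∈ 𝓑 := h𝓑.2.2 g⁻¹ (G.inv_mem hg) B hB
  rw [mul_smul, mul_smul, fixBlocks_smul hn h1, smul_inv_smul]

lemma block_eq_of_mem {G : Subgroup (Equiv.Perm X)} {𝓑 : Set (Set X)}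
    (h𝓑 : _root_.IsBlockSystem G 𝓑) {B C : Set X} (hB : B ∈ 𝓑) (hC : C ∈ 𝓑)
    {x : X} (hxB : x ∈ B) (hxC : x ∈ C) : B = C := by
  obtain ⟨D, _, hD⟩ := h𝓑.2.1 x
  rw [hD B ⟨hB, hxB⟩, hD C ⟨hC, hxC⟩]

lemma exists_conj_block {G : Subgroup (Equiv.Perm X)} {𝓑 : Set (Set X)}
    (hG : SubTrans G) (h𝓑 : _root_.IsBlockSystem G 𝓑)
    {B₀ B : Set X} (hB₀ : B₀ ∈ 𝓑) (hB : B ∈ 𝓑) : ∃ c ∈ G, c '' B₀ = B := by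
  obtain ⟨x₀, hx₀⟩ := h𝓑.1 B₀ hB₀
  obtain ⟨y, hy⟩ := h𝓑.1 B hB
  obtain ⟨c, hc, hcy⟩ := hG x₀ y
  exact ⟨c, hc, block_eq_of_mem h𝓑 (h𝓑.2.2 c hc B₀ hB₀) hB ⟨x₀, hx₀, hcy⟩ hy⟩

lemma mem_pointStab {A : Set X} {k : Equiv.Perm X} :
    k ∈ PointStab A ↔ ∀ a ∈ A, k a = a := by
  simp [PointStab, Subgroup.mem_iInf, MulAction.mem_stabilizer_iff, Equiv.Perm.smul_def]

/-- `Equiv.permCongr` as a `MulEquiv`. -/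
def permCongrMul {α β : Type*} (e : α ≃ β) : Equiv.Perm α ≃* Equiv.Perm β :=
  { e.permCongr with
    map_mul' := fun σ τ => Equiv.ext fun x => by
      simp [Equiv.permCongr_apply, Equiv.Perm.mul_apply] }

/-- The equivalence between two blocks induced by a permutation carrying one to the other. -/
def blockEquiv {B₀ B : Set X} (c : Equiv.Perm X) (hc : c '' B₀ = B) : B₀ ≃ B where
  toFun x := ⟨c x, by rw [← hc]; exact ⟨x, x.2, rfl⟩⟩
  invFun y := ⟨c⁻¹ y, by
    have hy : (y : X) ∈ c '' B₀ := by rw [hc]; exact y.2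
    obtain ⟨z, hz, hzy⟩ := hy
    rw [← hzy]
    simpa using hz⟩
  left_inv x := Subtype.ext (by simp)
  right_inv y := Subtype.ext (by simp)

lemma map_inducedSub {G : Subgroup (Equiv.Perm X)} {𝓑 : Set (Set X)} (h𝓑 : _root_.IsBlockSystem G 𝓑)
    {B₀ B : Set X} (hB₀ : B₀ ∈ 𝓑) (hB : B ∈ 𝓑) {c : Equiv.Perm X} (hcG : c ∈ G)
    (hc : c '' B₀ = B) :
    Subgroup.map (permCongrMul (blockEquiv c hc)).toMonoidHom (InducedSub (FixBlocks G 𝓑) B₀)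
      = InducedSub (FixBlocks G 𝓑) B := by
  ext σ
  rw [Subgroup.mem_map]
  constructor
  · rintro ⟨τ, hτ, rfl⟩
    obtain ⟨n, hnN, rfl⟩ := mem_inducedSub.mp hτ
    have hmem : c * ↑n * c⁻¹ ∈ FixBlocks G 𝓑 := fixBlocks_conj_mem h𝓑 hcG hnN
    have hstab : c * ↑n * c⁻¹ ∈ stabilizer (Equiv.Perm X) B := fixBlocks_le_stabilizer G hB hmem
    rw [mem_inducedSub]
    refine ⟨⟨c * ↑n * c⁻¹, hstab⟩, hmem, ?_⟩
    apply Equiv.ext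
    intro x
    apply Subtype.ext
    show ((c * (n : Equiv.Perm X) * c⁻¹) : Equiv.Perm X) ↑x
      = ((permCongrMul (blockEquiv c hc)).toMonoidHom (restrictHom B₀ n) x : X)
    show c ((n : Equiv.Perm X) (c⁻¹ ↑x))
      = ((blockEquiv c hc) ((restrictHom B₀ n) ((blockEquiv c hc).symm x)) : X)
    rfl
  · intro hσ
    obtain ⟨m, hmN, rfl⟩ := mem_inducedSub.mp hσ
    have hmem : c⁻¹ * ↑m * c ∈ FixBlocks G 𝓑 := by
      have := fixBlocks_conj_mem h𝓑 (G.inv_mem hcG) hmN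
      simpa using this
    have hstab : c⁻¹ * ↑m * c ∈ stabilizer (Equiv.Perm X) B₀ :=
      fixBlocks_le_stabilizer G hB₀ hmem
    refine ⟨restrictHom B₀ ⟨c⁻¹ * ↑m * c, hstab⟩, mem_inducedSub.mpr ⟨_, hmem, rfl⟩, ?_⟩
    apply Equiv.ext
    intro x
    apply Subtype.ext
    show ((blockEquiv c hc) ((restrictHom B₀ ⟨c⁻¹ * ↑m * c, hstab⟩)
        ((blockEquiv c hc).symm x)) : X) = ((m : Equiv.Perm X) ↑x : X)
    show c ((c⁻¹ * ↑m * c) (c⁻¹ ↑x)) = (m : Equiv.Perm X) ↑x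
    simp [Equiv.Perm.mul_apply]

lemma inducedSub_normalIn {M N : Subgroup (Equiv.Perm X)} {B : Set X} (hMN : NormalIn N M)
    (hNst : N ≤ stabilizer (Equiv.Perm X) B) :
    NormalIn (InducedSub N B) (InducedSub M B) := by
  constructor
  · rintro σ hσ
    obtain ⟨g, hg, rfl⟩ := mem_inducedSub.mp hσ
    exact mem_inducedSub.mpr ⟨g, hMN.1 hg, rfl⟩
  · intro τ hτ σ hσ
    obtain ⟨n, hn, rfl⟩ := mem_inducedSub.mp hτ
    obtain ⟨k, hk, rfl⟩ := mem_inducedSub.mp hσ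
    refine mem_inducedSub.mpr ⟨n * k * n⁻¹, ?_, ?_⟩
    · have := hMN.2 ↑n hn ↑k hk
      simpa using this
    · rw [map_mul, map_mul, map_inv]

lemma match_mul {B : Set X} {σ τ : Equiv.Perm B} {y z : Equiv.Perm X}
    (hσ : ∀ x : B, ((σ x : B) : X) = y x) (hτ : ∀ x : B, ((τ x : B) : X) = z x) :
    ∀ x : B, (((σ * τ) x : B) : X) = (y * z) x := by
  intro x
  calc (((σ * τ) x : B) : X) = ((σ (τ x) : B) : X) := rfl
    _ = y ((τ x : B) : X) := hσ (τ x)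
    _ = y (z x) := by rw [hτ x]
    _ = (y * z) x := rfl

lemma match_inv {B : Set X} {σ : Equiv.Perm B} {y : Equiv.Perm X}
    (hσ : ∀ x : B, ((σ x : B) : X) = y x) :
    ∀ x : B, (((σ⁻¹) x : B) : X) = y⁻¹ x := by
  intro x
  have h1 : y (((σ⁻¹) x : B) : X) = (x : X) := by
    rw [← hσ (σ⁻¹ x)]
    congr 1
    exact Equiv.apply_symm_apply _ _
  rw [show (y⁻¹ ↑x : X) = (σ⁻¹ x : X) from Equiv.Perm.inv_eq_iff_eq.mpr h1.symm]

end PermBlockLemmas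
section CoreLemmas

open Equiv MulAction

variable {X : Type*}

lemma socB_conj {G : Subgroup (Equiv.Perm X)} {𝓑 : Set (Set X)} {B : Set X} (hB : B ∈ 𝓑)
    {n y : Equiv.Perm X} (hn : n ∈ FixBlocks G 𝓑)
    {σ : Equiv.Perm B} (hσ : σ ∈ SocleIn (InducedSub (FixBlocks G 𝓑) B))
    (hmatch : ∀ x : B, ((σ x : B) : X) = y x) :
    ∃ τ ∈ SocleIn (InducedSub (FixBlocks G 𝓑) B),
      ∀ x : B, ((τ x : B) : X) = (n * y * n⁻¹) x := by
  have hnst : n ∈ stabilizer (Equiv.Perm X) B := fixBlocks_le_stabilizer G hB hn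
  set ρ : Equiv.Perm B := restrictHom B ⟨n, hnst⟩ with hρ
  have hρmem : ρ ∈ InducedSub (FixBlocks G 𝓑) B := mem_inducedSub.mpr ⟨⟨n, hnst⟩, hn, rfl⟩
  refine ⟨ρ * σ * ρ⁻¹, (socleIn_normalIn _).2 ρ hρmem _ hσ, ?_⟩
  have h1 : ∀ x : B, ((ρ x : B) : X) = n x := fun x => restrictHom_coe _ x
  have h2 : ∀ x : B, (((ρ⁻¹) x : B) : X) = n⁻¹ x := match_inv h1
  exact match_mul (match_mul h1 hmatch) h2

lemma perBlock [Finite X] {G : Subgroup (Equiv.Perm X)} {𝓑 : Set (Set X)}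
    (h𝓑 : _root_.IsBlockSystem G 𝓑) {B : Set X} (hB : B ∈ 𝓑)
    (h1 : SocleIn (InducedSub (FixBlocks G 𝓑) B) ≠ ⊥)
    (h2 : AmbSimple (SocleIn (InducedSub (FixBlocks G 𝓑) B)))
    {M : Subgroup (Equiv.Perm X)} (hM : MinimalNormalIn (FixBlocks G 𝓑) M)
    {m : Equiv.Perm X} (hm : m ∈ M) :
    ∃ σ ∈ SocleIn (InducedSub (FixBlocks G 𝓑) B), ∀ x : B, ((σ x : B) : X) = m x := by
  classical
  have hMN : M ≤ FixBlocks G 𝓑 := hM.1.1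
  have hNst : FixBlocks G 𝓑 ≤ stabilizer (Equiv.Perm X) B := fixBlocks_le_stabilizer G hB
  set L : Subgroup (Equiv.Perm X) :=
    { carrier := {y | y ∈ M ∧ ∃ σ ∈ SocleIn (InducedSub (FixBlocks G 𝓑) B),
        ∀ x : B, ((σ x : B) : X) = y x}
      one_mem' := ⟨M.one_mem, 1, one_mem _, fun x => rfl⟩
      mul_mem' := by
        rintro y z ⟨hyM, σ, hσ, hσy⟩ ⟨hzM, τ, hτ, hτz⟩
        exact ⟨M.mul_mem hyM hzM, σ * τ, mul_mem hσ hτ, match_mul hσy hτz⟩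
      inv_mem' := by
        rintro y ⟨hyM, σ, hσ, hσy⟩
        exact ⟨M.inv_mem hyM, σ⁻¹, inv_mem hσ, match_inv hσy⟩ } with hLdef
  have hLnorm : NormalIn (FixBlocks G 𝓑) L := by
    refine ⟨fun y hy => hMN hy.1, fun n hn y hy => ?_⟩
    obtain ⟨hyM, σ, hσ, hσy⟩ := hy
    obtain ⟨τ, hτ, hτm⟩ := socB_conj hB hn hσ hσy
    exact ⟨hM.1.2 n hn y hyM, τ, hτ, hτm⟩
  rcases hM.2.2 L hLnorm (fun y hy => hy.1) with hbot | heq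
  · by_cases hcase : InducedSub M B = ⊥
    · have hmst : m ∈ stabilizer (Equiv.Perm X) B := hNst (hMN hm)
      have hmem : restrictHom B ⟨m, hmst⟩ ∈ InducedSub M B :=
        mem_inducedSub.mpr ⟨⟨m, hmst⟩, hm, rfl⟩
      rw [hcase, Subgroup.mem_bot] at hmem
      refine ⟨1, one_mem _, fun x => ?_⟩
      have h3 := congrArg (fun σ : Equiv.Perm B => ((σ x : B) : X)) hmem
      simp only [restrictHom_coe] at h3
      exact ((Equiv.Perm.one_apply x) ▸ h3).symm ▸ rfl
    · exfalso
      have hIndN : NormalIn (InducedSub (FixBlocks G 𝓑) B) (InducedSub M B) :=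
        inducedSub_normalIn hM.1 hNst
      have hle := socle_le_of_normalIn h2 hIndN hcase
      obtain ⟨⟨t, htSoc⟩, htne⟩ := Subgroup.ne_bot_iff_exists_ne_one.mp h1
      have htne' : t ≠ 1 := fun h => htne (Subtype.ext (by simp [h]))
      obtain ⟨mm, hmmM, hmmt⟩ := mem_inducedSub.mp (hle htSoc)
      have hmmL : (mm : Equiv.Perm X) ∈ L :=
        ⟨hmmM, t, htSoc, by rw [← hmmt]; exact fun x => restrictHom_coe _ _⟩
      rw [hbot, Subgroup.mem_bot] at hmmL
      apply htne'
      rw [← hmmt]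
      have hmm1 : mm = 1 := Subtype.ext hmmL
      rw [hmm1, map_one]
  · have hmL : m ∈ L := by rw [heq]; exact hm
    exact hmL.2

lemma le_socle_of_blockwise [Finite X] {G : Subgroup (Equiv.Perm X)} {𝓑 : Set (Set X)}
    (h𝓑 : _root_.IsBlockSystem G 𝓑)
    (hfacts : ∀ B ∈ 𝓑, SocleIn (InducedSub (FixBlocks G 𝓑) B) ≠ ⊥ ∧
      AmbSimple (SocleIn (InducedSub (FixBlocks G 𝓑) B))) :
    ∀ (n : ℕ) (K : Subgroup (Equiv.Perm X)), Nat.card K ≤ n →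
      NormalIn (FixBlocks G 𝓑) K →
      (∀ k ∈ K, ∀ B ∈ 𝓑, ∃ σ ∈ SocleIn (InducedSub (FixBlocks G 𝓑) B),
        ∀ x : B, ((σ x : B) : X) = k x) →
      K ≤ SocleIn (FixBlocks G 𝓑) := by
  intro n
  induction n with
  | zero =>
    intro K hc
    exact absurd (Nat.le_zero.mp hc) Nat.card_pos.ne'
  | succ n ih =>
    intro K hc hKnorm hKblock
    by_cases hK0 : K = ⊥
    · rw [hK0]; exact bot_le
    obtain ⟨M, hM, hMK⟩ := exists_minimalNormalIn_le (Nat.card K) K le_rfl hKnorm hK0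
    obtain ⟨m₀, hm₀1⟩ := Subgroup.ne_bot_iff_exists_ne_one.mp hM.2.1
    have hm₀M : (m₀ : Equiv.Perm X) ∈ M := m₀.2
    have hm₀ne : (m₀ : Equiv.Perm X) ≠ 1 := fun h => hm₀1 (Subtype.ext (by simp [h]))
    obtain ⟨x₀, hx₀⟩ : ∃ x, (m₀ : Equiv.Perm X) x ≠ x := by
      by_contra h
      push_neg at h
      exact hm₀ne (Equiv.ext h)
    obtain ⟨B₁, hB₁, hx₀B⟩ : ∃ B ∈ 𝓑, x₀ ∈ B := by
      obtain ⟨B, hB, _⟩ := h𝓑.2.1 x₀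
      exact ⟨B, hB.1, hB.2⟩
    have hNst : FixBlocks G 𝓑 ≤ stabilizer (Equiv.Perm X) B₁ := fixBlocks_le_stabilizer G hB₁
    have hMN : M ≤ FixBlocks G 𝓑 := hM.1.1
    have hInd : InducedSub M B₁ ≠ ⊥ := by
      intro hbot
      have hmst : (m₀ : Equiv.Perm X) ∈ stabilizer (Equiv.Perm X) B₁ := hNst (hMN hm₀M)
      have hmem : restrictHom B₁ ⟨(m₀ : Equiv.Perm X), hmst⟩ ∈ InducedSub M B₁ :=
        mem_inducedSub.mpr ⟨⟨_, hmst⟩, hm₀M, rfl⟩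
      rw [hbot, Subgroup.mem_bot] at hmem
      have h3 := congrArg (fun σ : Equiv.Perm B₁ => ((σ ⟨x₀, hx₀B⟩ : B₁) : X)) hmem
      simp only [restrictHom_coe, Equiv.Perm.one_apply] at h3
      exact hx₀ h3
    have hSocle_le : SocleIn (InducedSub (FixBlocks G 𝓑) B₁) ≤ InducedSub M B₁ :=
      socle_le_of_normalIn (hfacts B₁ hB₁).2 (inducedSub_normalIn hM.1 hNst) hInd
    set K₁ : Subgroup (Equiv.Perm X) := K ⊓ PointStab B₁ with hK₁def
    have hK₁norm : NormalIn (FixBlocks G 𝓑) K₁ := by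
      refine ⟨inf_le_left.trans hKnorm.1, fun g hg k hk => ?_⟩
      rw [Subgroup.mem_inf] at hk
      refine Subgroup.mem_inf.mpr ⟨hKnorm.2 g hg k hk.1, mem_pointStab.mpr fun a ha => ?_⟩
      have hga : g⁻¹ a ∈ B₁ := stab_apply_mem (hNst ((FixBlocks G 𝓑).inv_mem hg)) ha
      calc (g * k * g⁻¹) a = g (k (g⁻¹ a)) := rfl
        _ = g (g⁻¹ a) := by rw [mem_pointStab.mp hk.2 _ hga]
        _ = a := Equiv.apply_symm_apply g a
    have hm₀K : (m₀ : Equiv.Perm X) ∈ K := hMK hm₀M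
    have hK₁lt : K₁ < K := by
      refine lt_of_le_of_ne inf_le_left fun h => hx₀ ?_
      have hmem : (m₀ : Equiv.Perm X) ∈ K₁ := by rw [h]; exact hm₀K
      exact mem_pointStab.mp (Subgroup.mem_inf.mp hmem).2 x₀ hx₀B
    have hcard : Nat.card K₁ ≤ n := by
      have := card_lt_of_subgroup_lt hK₁lt
      omega
    have hK₁soc : K₁ ≤ SocleIn (FixBlocks G 𝓑) :=
      ih K₁ hcard hK₁norm fun k hk => hKblock k (Subgroup.mem_inf.mp hk).1
    intro k hk
    obtain ⟨σ, hσ, hσk⟩ := hKblock k hk B₁ hB₁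
    obtain ⟨mm, hmmM, hmmσ⟩ := mem_inducedSub.mp (hSocle_le hσ)
    have hmk : ((mm : Equiv.Perm X))⁻¹ * k ∈ K₁ := by
      refine Subgroup.mem_inf.mpr ⟨K.mul_mem (K.inv_mem (hMK hmmM)) hk,
        mem_pointStab.mpr fun a ha => ?_⟩
      have hka : k a = (mm : Equiv.Perm X) a := by
        have hh1 := hσk ⟨a, ha⟩
        have hh2 : ((σ ⟨a, ha⟩ : B₁) : X) = (mm : Equiv.Perm X) a := by
          rw [← hmmσ]; exact restrictHom_coe mm ⟨a, ha⟩
        rw [← hh1, hh2]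
      calc ((mm : Equiv.Perm X)⁻¹ * k) a = (mm : Equiv.Perm X)⁻¹ (k a) := rfl
        _ = (mm : Equiv.Perm X)⁻¹ ((mm : Equiv.Perm X) a) := by rw [hka]
        _ = a := Equiv.symm_apply_apply _ _
    have hksplit : k = ↑mm * ((↑mm)⁻¹ * k) := by group
    rw [hksplit]
    exact mul_mem (le_socleIn hM hmmM) (hK₁soc hmk)

end CoreLemmas
/-- Lemma 4.3, part (4): `g ∈ N` belongs to `Soc(N)` iff its restriction to
every block `B ∈ 𝓑` belongs to `Soc(N^B)`. -/
theorem statement5 {X : Type*} [Finite X] (G : Subgroup (Equiv.Perm X)) (hG : SubTrans G)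
    (𝓑 : Set (Set X)) (h𝓑 : IsNormalBlockSystem G 𝓑) (B₀ : Set X) (hB₀ : B₀ ∈ 𝓑)
    (hTtrans : SubTrans (SocleIn (InducedSub (FixBlocks G 𝓑) B₀)))
    (hTsimple : IsSimpleGroup ↥(SocleIn (InducedSub (FixBlocks G 𝓑) B₀)))
    (hTnonab : ∃ a b : ↥(SocleIn (InducedSub (FixBlocks G 𝓑) B₀)), a * b ≠ b * a)
    (g : Equiv.Perm X) (hg : g ∈ FixBlocks G 𝓑) :
    g ∈ SocleIn (FixBlocks G 𝓑) ↔
      ∀ B ∈ 𝓑, ∃ σ ∈ SocleIn (InducedSub (FixBlocks G 𝓑) B),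
        ∀ x : ↥B, (σ x : X) = g ↑x := by
  classical
  have hbs : _root_.IsBlockSystem G 𝓑 := h𝓑.1
  have hS0 : SocleIn (InducedSub (FixBlocks G 𝓑) B₀) ≠ ⊥ := by
    haveI := hTsimple
    exact (Subgroup.nontrivial_iff_ne_bot _).mp inferInstance
  have hA0 : AmbSimple (SocleIn (InducedSub (FixBlocks G 𝓑) B₀)) :=
    ambSimple_of_isSimple hTsimple
  have hfacts : ∀ B ∈ 𝓑, SocleIn (InducedSub (FixBlocks G 𝓑) B) ≠ ⊥ ∧
      AmbSimple (SocleIn (InducedSub (FixBlocks G 𝓑) B)) := by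
    intro B hB
    obtain ⟨c, hcG, hc⟩ := exists_conj_block hG hbs hB₀ hB
    have hmap := map_inducedSub hbs hB₀ hB hcG hc
    constructor
    · rw [← hmap, socleIn_map]
      intro hbot
      apply hS0
      have := congrArg
        (Subgroup.map (permCongrMul (blockEquiv c hc)).symm.toMonoidHom) hbot
      rwa [map_symm_map, Subgroup.map_bot] at this
    · rw [← hmap, socleIn_map]
      exact ambSimple_map _ hA0
  constructor
  · intro hgsoc
    refine socleIn_induction hgsoc
      (C := fun y => ∀ B ∈ 𝓑, ∃ σ ∈ SocleIn (InducedSub (FixBlocks G 𝓑) B),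
        ∀ x : B, ((σ x : B) : X) = y ↑x) ?_ ?_ ?_
    · intro M hM y hy B hB
      exact perBlock hbs hB (hfacts B hB).1 (hfacts B hB).2 hM hy
    · intro B hB
      exact ⟨1, one_mem _, fun x => rfl⟩
    · intro a b ha hb B hB
      obtain ⟨σ, hσ, hσa⟩ := ha B hB
      obtain ⟨τ, hτ, hτb⟩ := hb B hB
      exact ⟨σ * τ, mul_mem hσ hτ, match_mul hσa hτb⟩
  · intro hP
    set K : Subgroup (Equiv.Perm X) :=
      { carrier := {k | k ∈ FixBlocks G 𝓑 ∧ ∀ B ∈ 𝓑,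
          ∃ σ ∈ SocleIn (InducedSub (FixBlocks G 𝓑) B), ∀ x : B, ((σ x : B) : X) = k x}
        one_mem' := ⟨one_mem _, fun B hB => ⟨1, one_mem _, fun x => rfl⟩⟩
        mul_mem' := by
          rintro y z ⟨hy, hy2⟩ ⟨hz, hz2⟩
          refine ⟨mul_mem hy hz, fun B hB => ?_⟩
          obtain ⟨σ, hσ, hσy⟩ := hy2 B hB
          obtain ⟨τ, hτ, hτz⟩ := hz2 B hB
          exact ⟨σ * τ, mul_mem hσ hτ, match_mul hσy hτz⟩
        inv_mem' := by
          rintro y ⟨hy, hy2⟩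
          refine ⟨inv_mem hy, fun B hB => ?_⟩
          obtain ⟨σ, hσ, hσy⟩ := hy2 B hB
          exact ⟨σ⁻¹, inv_mem hσ, match_inv hσy⟩ } with hKdef
    have hKnorm : NormalIn (FixBlocks G 𝓑) K := by
      refine ⟨fun k hk => hk.1, fun n hn k hk => ?_⟩
      refine ⟨(FixBlocks G 𝓑).mul_mem ((FixBlocks G 𝓑).mul_mem hn hk.1)
        ((FixBlocks G 𝓑).inv_mem hn), fun B hB => ?_⟩
      obtain ⟨σ, hσ, hσk⟩ := hk.2 B hB
      exact socB_conj hB hn hσ hσk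
    exact le_socle_of_blockwise hbs hfacts (Nat.card K) K le_rfl hKnorm
      (fun k hk => hk.2) ⟨hg, hP⟩
end

section
/- Let p > 5 be a prime with p ≡ 1 (mod 4). Then none of the following three groups is a CI-group with respect to ternary relational structures: (i) the cyclic group Z_{4p}; (ii) the Frobenius group of order 4p, i.e., ZMod p ⋊ Z₄ where a generator of Z₄ acts on ZMod p by multiplication by an element of multiplicative order 4 in (ZMod p)ˣ; (iii) the dicyclic group of order 4p, i.e., Z_p ⋊ Z₄ where a generator of Z₄ acts on Z_p by inversion (the group ⟨x, y : x^p = y⁴ = 1, y⁻¹xy = x⁻¹⟩). -/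
open Equiv Pointwise

namespace S19

variable {p : ℕ}

/-- The set of "ascending-block" triples with values on an affine line given by `E`. -/
def TT (E : ZMod 4 → ZMod p) : Set ((ZMod 4 × ZMod p) × (ZMod 4 × ZMod p) × (ZMod 4 × ZMod p)) :=
  {t | ∃ a α β, t = ((a, α + β * E a), ((a + 1, α + β * E (a + 1)), (a + 2, α + β * E (a + 2))))}

lemma pow_val_add (μ : ZMod p) (hμ : μ ^ 4 = 1) (i j : ZMod 4) :
    μ ^ ((i + j).val) = μ ^ i.val * μ ^ j.val := by
  rw [ZMod.val_add, ← pow_add]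
  set n := i.val + j.val with hn
  calc μ ^ (n % 4) = μ ^ (n % 4) * (μ ^ 4) ^ (n / 4) := by rw [hμ, one_pow, mul_one]
  _ = μ ^ (n % 4 + 4 * (n / 4)) := by rw [← pow_mul, ← pow_add]
  _ = μ ^ n := by rw [Nat.mod_add_div]

lemma mapMem (ω : ZMod p) (E : ZMod 4 → ZMod p)
    (hE : ∀ i j, E (i + j) = E i * E j)
    (a : ZMod 4) (k : ℕ) (c : ZMod p)
    {t : (ZMod 4 × ZMod p) × (ZMod 4 × ZMod p) × (ZMod 4 × ZMod p)} (ht : t ∈ TT E) :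
    ((t.1.1 + a, ω ^ k * t.1.2 + c), (t.2.1.1 + a, ω ^ k * t.2.1.2 + c),
      (t.2.2.1 + a, ω ^ k * t.2.2.2 + c)) ∈ TT E := by
  obtain ⟨b, α, β, rfl⟩ := ht
  refine ⟨b + a, ω ^ k * α + c, ω ^ k * β * E (-a), ?_⟩
  have key : ∀ j : ZMod 4, ω ^ k * (α + β * E j) + c
      = (ω ^ k * α + c) + (ω ^ k * β * E (-a)) * E (j + a) := by
    intro j
    have h1 : E (-a) * E (j + a) = E j := by
      rw [← hE]; congr 1; ring
    linear_combination (ω ^ k * β) * h1.symm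
  simp only [Prod.mk.injEq]
  refine ⟨⟨trivial, key b⟩, ⟨by ring, ?_⟩, by ring, ?_⟩
  · rw [show (b + a) + 1 = (b + 1) + a by ring]; exact key (b + 1)
  · rw [show (b + a) + 2 = (b + 2) + a by ring]; exact key (b + 2)

lemma sigmaMem (E E' : ZMod 4 → ZMod p) (hEE' : ∀ j, E' j * E j = 1)
    {t : (ZMod 4 × ZMod p) × (ZMod 4 × ZMod p) × (ZMod 4 × ZMod p)} (ht : t ∈ TT E) :
    ((t.1.1, E' t.1.1 * t.1.2), (t.2.1.1, E' t.2.1.1 * t.2.1.2),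
      (t.2.2.1, E' t.2.2.1 * t.2.2.2)) ∈ TT E' := by
  obtain ⟨b, α, β, rfl⟩ := ht
  refine ⟨b, β, α, ?_⟩
  simp only [Prod.mk.injEq]
  exact ⟨⟨trivial, by linear_combination β * (hEE' b)⟩, ⟨trivial, by linear_combination β * (hEE' (b+1))⟩,
    trivial, by linear_combination β * (hEE' (b+2))⟩

lemma tripleImage {G : Type*} (f : Equiv.Perm G) (A B : Set (G × G × G))
    (hAB : ∀ t ∈ A, ((f t.1, f t.2.1, f t.2.2) : G × G × G) ∈ B)
    (hBA : ∀ t ∈ B, ((f.symm t.1, f.symm t.2.1, f.symm t.2.2) : G × G × G) ∈ A) :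
    (fun t : G × G × G => (f t.1, f t.2.1, f t.2.2)) '' A = B := by
  ext s
  constructor
  · rintro ⟨t, ht, rfl⟩; exact hAB t ht
  · intro hs
    refine ⟨(f.symm s.1, f.symm s.2.1, f.symm s.2.2), hBA s hs, ?_⟩
    simp

end S19

open S19 in
theorem master {G : Type*} [Group G] (p : ℕ) [Fact p.Prime]
    (hp2 : (2 : ZMod p) ≠ 0) (ω : ZMod p) (hω : ω ^ 2 = -1)
    (β : G ≃ ZMod 4 × ZMod p)
    (H1 : ∀ g : G, ∃ (a : ZMod 4) (k : ℕ) (c : ZMod p),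
      ∀ y : ZMod 4 × ZMod p, β (g * β.symm y) = (y.1 + a, ω ^ k * y.2 + c))
    (H2 : ∀ φ : G ≃* G, ∃ (u : ZMod 4) (m : ZMod p) (w : ZMod 4 → ZMod p),
      (u = 1 ∨ u = 3) ∧ m ≠ 0 ∧
      ∀ y : ZMod 4 × ZMod p, β (φ (β.symm y)) = (u * y.1, m * y.2 + w y.1)) :
    ¬ IsTernaryCI G := by
  have hω4 : ω ^ 4 = 1 := by
    have : ω ^ 4 = (ω ^ 2) ^ 2 := by ring
    rw [this, hω]; ring
  have hωn4 : (-ω) ^ 4 = 1 := by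
    have : (-ω) ^ 4 = (ω ^ 2) ^ 2 := by ring
    rw [this, hω]; ring
  set E : ZMod 4 → ZMod p := fun j => (-ω) ^ j.val with hEdef
  set E' : ZMod 4 → ZMod p := fun j => ω ^ j.val with hE'def
  have hE : ∀ i j, E (i + j) = E i * E j := fun i j => pow_val_add (-ω) hωn4 i j
  have hE' : ∀ i j, E' (i + j) = E' i * E' j := fun i j => pow_val_add ω hω4 i j
  have hEE' : ∀ j, E' j * E j = 1 := by
    intro j
    show ω ^ j.val * (-ω) ^ j.val = 1
    rw [← mul_pow]
    have : ω * -ω = 1 := by linear_combination -hω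
    rw [this, one_pow]
  have hE'E : ∀ j, E j * E' j = 1 := fun j => by rw [mul_comm]; exact hEE' j
  set Rset : Set (G × G × G) := {t | ((β t.1, β t.2.1, β t.2.2) :
    (ZMod 4 × ZMod p) × (ZMod 4 × ZMod p) × (ZMod 4 × ZMod p)) ∈ TT E} with hRdef
  set Sset : Set (G × G × G) := {t | ((β t.1, β t.2.1, β t.2.2) :
    (ZMod 4 × ZMod p) × (ZMod 4 × ZMod p) × (ZMod 4 × ZMod p)) ∈ TT E'} with hSdef
  -- the twisting permutation
  set σG : Equiv.Perm G := {
    toFun := fun g => β.symm ((β g).1, E' (β g).1 * (β g).2)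
    invFun := fun g => β.symm ((β g).1, E (β g).1 * (β g).2)
    left_inv := by
      intro g
      simp only [Equiv.apply_symm_apply]
      rw [← mul_assoc, hE'E]
      simp
    right_inv := by
      intro g
      simp only [Equiv.apply_symm_apply]
      rw [← mul_assoc, hEE']
      simp } with hσdef
  -- translations preserve both Rset and Sset
  have transMem : ∀ (g : G) (t : G × G × G) (F : ZMod 4 → ZMod p)
      (hF : ∀ i j, F (i + j) = F i * F j),
      ((β t.1, β t.2.1, β t.2.2) ∈ TT F) →
      ((β (g * t.1), β (g * t.2.1), β (g * t.2.2)) ∈ TT F) := by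
    intro g t F hF ht
    obtain ⟨a, k, c, h⟩ := H1 g
    have hg : ∀ r : G, β (g * r) = ((β r).1 + a, ω ^ k * (β r).2 + c) := by
      intro r
      have := h (β r)
      simpa using this
    rw [hg t.1, hg t.2.1, hg t.2.2]
    exact mapMem ω F hF a k c ht
  have cayR : CayleyTernary G (fun _ : Unit => Rset) := by
    intro g i
    refine tripleImage (Equiv.mulLeft g) Rset Rset ?_ ?_
    · intro t ht
      exact transMem g t E hE ht
    · intro t ht
      simp only [Equiv.mulLeft_symm]
      exact transMem g⁻¹ t E hE ht
  have cayS : CayleyTernary G (fun _ : Unit => Sset) := by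
    intro g i
    refine tripleImage (Equiv.mulLeft g) Sset Sset ?_ ?_
    · intro t ht
      exact transMem g t E' hE' ht
    · intro t ht
      simp only [Equiv.mulLeft_symm]
      exact transMem g⁻¹ t E' hE' ht
  have hσap : ∀ r : G, β (σG r) = ((β r).1, E' (β r).1 * (β r).2) := by
    intro r; simp [hσdef]
  have hσsymm : ∀ r : G, β (σG.symm r) = ((β r).1, E (β r).1 * (β r).2) := by
    intro r
    show β (β.symm ((β r).1, E (β r).1 * (β r).2)) = _
    rw [Equiv.apply_symm_apply]
  have isoσ : TernaryIso (fun _ : Unit => Rset) (fun _ : Unit => Sset) σG := by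
    intro i
    refine tripleImage σG Rset Sset ?_ ?_
    · intro t ht
      show ((β (σG t.1), β (σG t.2.1), β (σG t.2.2)) ∈ TT E')
      rw [hσap t.1, hσap t.2.1, hσap t.2.2]
      exact sigmaMem E E' hEE' ht
    · intro t ht
      show ((β (σG.symm t.1), β (σG.symm t.2.1), β (σG.symm t.2.2)) ∈ TT E)
      rw [hσsymm t.1, hσsymm t.2.1, hσsymm t.2.2]
      exact sigmaMem E' E hE'E ht
  intro hCI
  obtain ⟨φ, hφ⟩ := hCI Unit (fun _ => Rset) (fun _ => Sset) cayR cayS ⟨σG, isoσ⟩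
  obtain ⟨u, m, w, hu, hm, hF⟩ := H2 φ
  have hFr : ∀ r : G, β (φ r) = (u * (β r).1, m * (β r).2 + w (β r).1) := by
    intro r
    have := hF (β r)
    simpa using this
  -- two test triples
  have hmem : ∀ α0 β0 : ZMod p,
      ((u * (0:ZMod 4), m * (α0 + β0 * E 0) + w 0), ((u * 1, m * (α0 + β0 * E 1) + w 1),
        (u * 2, m * (α0 + β0 * E 2) + w 2))) ∈ TT E' := by
    intro α0 β0
    have hr : ((β.symm ((0:ZMod 4), α0 + β0 * E 0), β.symm (1, α0 + β0 * E 1),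
        β.symm (2, α0 + β0 * E 2)) : G × G × G) ∈ Rset := by
      show _ ∈ TT E
      simp only [Equiv.apply_symm_apply]
      refine ⟨0, α0, β0, ?_⟩
      norm_num
    have h0 : (fun t : G × G × G => (φ.toEquiv t.1, φ.toEquiv t.2.1, φ.toEquiv t.2.2)) ''
        Rset = Sset := hφ ()
    have himg := Set.mem_image_of_mem
      (fun t : G × G × G => (φ.toEquiv t.1, φ.toEquiv t.2.1, φ.toEquiv t.2.2)) hr
    rw [h0] at himg
    simp only [MulEquiv.coe_toEquiv] at himg
    have hmm : ((β (φ (β.symm ((0:ZMod 4), α0 + β0 * E 0))),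
        β (φ (β.symm (1, α0 + β0 * E 1))), β (φ (β.symm (2, α0 + β0 * E 2)))) ∈ TT E') := himg
    rw [hFr, hFr, hFr] at hmm
    simp only [Equiv.apply_symm_apply] at hmm
    exact hmm
  -- compute E values at 0 1 2
  have hv0 : ((0:ZMod 4)).val = 0 := by decide
  have hv1 : ((1:ZMod 4)).val = 1 := by decide
  have hv2 : ((2:ZMod 4)).val = 2 := by decide
  have hE0 : E 0 = 1 := by show (-ω) ^ ((0:ZMod 4)).val = 1; rw [hv0, pow_zero]
  have hE1 : E 1 = -ω := by show (-ω) ^ ((1:ZMod 4)).val = -ω; rw [hv1, pow_one]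
  have hE2 : E 2 = ω ^ 2 := by show (-ω) ^ ((2:ZMod 4)).val = ω ^ 2; rw [hv2]; ring
  have hE'0 : E' 0 = 1 := by show ω ^ ((0:ZMod 4)).val = 1; rw [hv0, pow_zero]
  have hE'1 : E' 1 = ω := by show ω ^ ((1:ZMod 4)).val = ω; rw [hv1, pow_one]
  have hE'2 : E' 2 = ω ^ 2 := by show ω ^ ((2:ZMod 4)).val = ω ^ 2; rw [hv2]
  -- extract equations from membership
  have extract : ∀ α0 β0 : ZMod p, u = 1 → ∃ A B : ZMod p,
      m * (α0 + β0 * E 0) + w 0 = A + B ∧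
      m * (α0 + β0 * E 1) + w 1 = A + B * ω ∧
      m * (α0 + β0 * E 2) + w 2 = A + B * ω ^ 2 := by
    intro α0 β0 hu1
    obtain ⟨b, A, B, heq⟩ := hmem α0 β0
    rw [hu1] at heq
    simp only [Prod.mk.injEq, one_mul] at heq
    obtain ⟨⟨hb0, hx0⟩, ⟨hb1, hx1⟩, hb2, hx2⟩ := heq
    subst hb0
    rw [show (0:ZMod 4) + 1 = 1 by decide] at hx1
    rw [show (0:ZMod 4) + 2 = 2 by decide] at hx2
    rw [hE'0] at hx0
    rw [hE'1] at hx1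
    rw [hE'2] at hx2
    exact ⟨A, B, by linear_combination hx0, by linear_combination hx1,
      by linear_combination hx2⟩
  rcases hu with hu1 | hu3
  · obtain ⟨A₁, B₁, f10, f11, f12⟩ := extract 0 0 hu1
    obtain ⟨A₂, B₂, f20, f21, f22⟩ := extract 0 1 hu1
    rw [hE0] at f10 f20
    rw [hE1] at f11 f21
    rw [hE2] at f12 f22
    have e1 : m = (A₂ - A₁) + (B₂ - B₁) := by linear_combination f20 - f10
    have e2 : -(m * ω) = (A₂ - A₁) + (B₂ - B₁) * ω := by linear_combination f21 - f11
    have e3 : m * ω ^ 2 = (A₂ - A₁) + (B₂ - B₁) * ω ^ 2 := by linear_combination f22 - f12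
    have hA : (2 : ZMod p) * (A₂ - A₁) = 0 := by
      linear_combination -e1 - e3 + (m - (B₂ - B₁)) * hω
    have hA0 : A₂ - A₁ = 0 := by
      rcases mul_eq_zero.mp hA with h | h
      · exact absurd h hp2
      · exact h
    have hB : B₂ - B₁ = m := by linear_combination -e1 - hA0
    have hmω : (2 : ZMod p) * (m * ω) = 0 := by linear_combination -e2 - hA0 - ω * hB
    have hmω0 : m * ω = 0 := by
      rcases mul_eq_zero.mp hmω with h | h
      · exact absurd h hp2
      · exact h
    rcases mul_eq_zero.mp hmω0 with h | h
    · exact hm h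
    · exact hp2 (by linear_combination 2 * hω - 2 * ω * h)
  · obtain ⟨b, A, B, heq⟩ := hmem 0 0
    rw [hu3] at heq
    simp only [Prod.mk.injEq] at heq
    obtain ⟨⟨hb0, -⟩, ⟨hb1, -⟩, -, -⟩ := heq
    rw [show (3 : ZMod 4) * 0 = 0 by decide] at hb0
    rw [show (3 : ZMod 4) * 1 = 3 by decide] at hb1
    subst hb0
    exact absurd hb1 (by decide)

open S19 in
theorem case1 (p : ℕ) (hp : p.Prime) (hp5 : 5 < p) (hmod : p % 4 = 1) :
    ¬ IsTernaryCI (Multiplicative (ZMod (4 * p))) := by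
  haveI : Fact p.Prime := ⟨hp⟩
  have hp2 : (2 : ZMod p) ≠ 0 := by
    intro h
    have h2 : ((2 : ℕ) : ZMod p) = 0 := by exact_mod_cast h
    have hd := (ZMod.natCast_eq_zero_iff 2 p).mp h2
    have := Nat.le_of_dvd (by norm_num) hd
    omega
  have hp4 : (4 : ZMod p) ≠ 0 := by
    have : (4 : ZMod p) = 2 * 2 := by norm_num
    rw [this]; exact mul_ne_zero hp2 hp2
  obtain ⟨ω, hω⟩ : ∃ ω : ZMod p, ω ^ 2 = -1 := by
    obtain ⟨r, hr⟩ := (ZMod.exists_sq_eq_neg_one_iff (p := p)).mpr (by omega)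
    exact ⟨r, by rw [sq]; exact hr.symm⟩
  have hco : Nat.Coprime 4 p := by
    have hnd : ¬ (p ∣ 4) := by intro h; have := Nat.le_of_dvd (by norm_num) h; omega
    exact Nat.coprime_comm.mp (hp.coprime_iff_not_dvd.mpr hnd)
  set crt := ZMod.chineseRemainder hco with hcrt
  set β : Multiplicative (ZMod (4 * p)) ≃ ZMod 4 × ZMod p :=
    Multiplicative.toAdd.trans crt.toEquiv with hβ
  have hpmod4 : ((p : ZMod 4)) = 1 := by
    have h4 : p = 4 * (p / 4) + 1 := by omega
    calc ((p : ℕ) : ZMod 4) = ((4 * (p / 4) + 1 : ℕ) : ZMod 4) := by rw [← h4]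
    _ = 1 := by push_cast; rw [show (4 : ZMod 4) = 0 by decide]; ring
  -- H1
  have H1 : ∀ g : Multiplicative (ZMod (4 * p)), ∃ (a : ZMod 4) (k : ℕ) (c : ZMod p),
      ∀ y : ZMod 4 × ZMod p, β (g * β.symm y) = (y.1 + a, ω ^ k * y.2 + c) := by
    intro g
    refine ⟨(crt (Multiplicative.toAdd g)).1, 0, (crt (Multiplicative.toAdd g)).2, ?_⟩
    intro y
    have h1 : β (g * β.symm y) = crt (Multiplicative.toAdd g + crt.symm y) := rfl
    rw [h1, map_add, RingEquiv.apply_symm_apply]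
    refine Prod.ext ?_ ?_
    · simp [add_comm]
    · simp [add_comm]
  -- H2
  have H2 : ∀ φ : Multiplicative (ZMod (4 * p)) ≃* Multiplicative (ZMod (4 * p)),
      ∃ (u : ZMod 4) (m : ZMod p) (w : ZMod 4 → ZMod p),
      (u = 1 ∨ u = 3) ∧ m ≠ 0 ∧
      ∀ y : ZMod 4 × ZMod p, β (φ (β.symm y)) = (u * y.1, m * y.2 + w y.1) := by
    intro φ
    set F : ZMod 4 × ZMod p ≃+ ZMod 4 × ZMod p := {
      toFun := fun y => crt (Multiplicative.toAdd (φ (Multiplicative.ofAdd (crt.symm y))))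
      invFun := fun y => crt (Multiplicative.toAdd (φ.symm (Multiplicative.ofAdd (crt.symm y))))
      left_inv := by intro y; simp
      right_inv := by intro y; simp
      map_add' := by
        intro y z
        show crt (Multiplicative.toAdd (φ (Multiplicative.ofAdd (crt.symm (y + z))))) =
          crt (Multiplicative.toAdd (φ (Multiplicative.ofAdd (crt.symm y)))) +
          crt (Multiplicative.toAdd (φ (Multiplicative.ofAdd (crt.symm z))))
        rw [map_add, ofAdd_add, map_mul, toAdd_mul, map_add]
    } with hFdef
    have hβF : ∀ y, β (φ (β.symm y)) = F y := fun y => rfl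
    set u : ZMod 4 := (F (1, 0)).1 with hu
    set m : ZMod p := (F (0, 1)).2 with hm
    -- second component of F (1,0) is 0
    have h40 : (4 : ℕ) • ((1 : ZMod 4), (0 : ZMod p)) = 0 := by
      refine Prod.ext ?_ ?_ <;> simp [nsmul_eq_mul]
      decide
    have hF10 : F (1, 0) = (u, 0) := by
      have h1 : (4 : ℕ) • F (1, 0) = 0 := by rw [← map_nsmul, h40, map_zero]
      have h2 : (4 : ℕ) • (F (1, 0)).2 = 0 := congrArg Prod.snd h1
      rw [nsmul_eq_mul] at h2
      push_cast at h2
      refine Prod.ext rfl ?_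
      rcases mul_eq_zero.mp h2 with h | h
      · exact absurd h hp4
      · exact h
    have hp0 : (p : ℕ) • ((0 : ZMod 4), (1 : ZMod p)) = 0 := by
      refine Prod.ext ?_ ?_ <;> simp [nsmul_eq_mul]
    have hF01 : F (0, 1) = (0, m) := by
      have h1 : (p : ℕ) • F (0, 1) = 0 := by rw [← map_nsmul, hp0, map_zero]
      have h2 : (p : ℕ) • (F (0, 1)).1 = 0 := congrArg Prod.fst h1
      rw [nsmul_eq_mul] at h2
      rw [hpmod4, one_mul] at h2
      exact Prod.ext h2 rfl
    -- F on the two factors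
    have hFn2 : ∀ n : ℕ, F (0, (n : ZMod p)) = (0, m * n) := by
      intro n
      have : ((0 : ZMod 4), ((n : ℕ) : ZMod p)) = (n : ℕ) • ((0 : ZMod 4), (1 : ZMod p)) := by
        refine Prod.ext ?_ ?_ <;> simp [nsmul_eq_mul]
      rw [this, map_nsmul, hF01]
      refine Prod.ext ?_ ?_ <;> simp [nsmul_eq_mul, mul_comm]
    have hFx : ∀ x : ZMod p, F (0, x) = (0, m * x) := by
      intro x
      have hxval : ((x.val : ℕ) : ZMod p) = x := by rw [ZMod.natCast_val, ZMod.cast_id]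
      rw [← hxval, hFn2]
    have hFn1 : ∀ n : ℕ, F ((n : ZMod 4), 0) = ((n : ZMod 4) * u, 0) := by
      intro n
      have : (((n : ℕ) : ZMod 4), (0 : ZMod p)) = (n : ℕ) • ((1 : ZMod 4), (0 : ZMod p)) := by
        refine Prod.ext ?_ ?_ <;> simp [nsmul_eq_mul]
      rw [this, map_nsmul, hF10]
      refine Prod.ext ?_ ?_ <;> simp [nsmul_eq_mul, mul_comm]
    have hFi : ∀ i : ZMod 4, F (i, 0) = (i * u, 0) := by
      intro i
      have hival : ((i.val : ℕ) : ZMod 4) = i := by rw [ZMod.natCast_val, ZMod.cast_id]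
      rw [← hival, hFn1]
    -- m ≠ 0
    have hm0 : m ≠ 0 := by
      intro h
      have : F (0, 1) = F (0, 0) := by
        rw [hF01, h]
        exact (map_zero F).symm
      have := F.injective this
      have h1 : (1 : ZMod p) = 0 := (Prod.ext_iff.mp this).2
      exact one_ne_zero h1
    -- u ∈ {1, 3}
    have hu13 : u = 1 ∨ u = 3 := by
      have h2u : 2 * u ≠ 0 := by
        intro h
        have he : F (2, 0) = F (0, 0) := by
          rw [hFi, h]
          exact (map_zero F).symm
        have := F.injective he
        have h1 : (2 : ZMod 4) = 0 := (Prod.ext_iff.mp this).1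
        exact absurd h1 (by decide)
      exact (by decide : ∀ v : ZMod 4, 2 * v ≠ 0 → v = 1 ∨ v = 3) u h2u
    refine ⟨u, m, fun _ => 0, hu13, hm0, ?_⟩
    intro y
    rw [hβF]
    have hsplit : (y.1, y.2) = ((y.1, (0:ZMod p)) + ((0:ZMod 4), y.2)) := by
      refine Prod.ext ?_ ?_ <;> simp
    calc F y = F ((y.1, (0:ZMod p)) + ((0:ZMod 4), y.2)) := by rw [← hsplit]
    _ = (y.1 * u, 0) + (0, m * y.2) := by rw [map_add, hFi, hFx]
    _ = (u * y.1, m * y.2 + 0) := by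
        refine Prod.ext ?_ ?_ <;> simp [mul_comm]
  exact master p hp2 ω hω β H1 H2

open S19 Multiplicative SemidirectProduct in
theorem caseSemi (p : ℕ) (hp : p.Prime) (hp5 : 5 < p) (hmod : p % 4 = 1)
    (ψ : Multiplicative (ZMod 4) →* MulAut (Multiplicative (ZMod p)))
    (ρ : ZMod p)
    (hψ1 : ∀ x : ZMod p, ψ (ofAdd (1 : ZMod 4)) (ofAdd x) = ofAdd (ρ * x))
    (ω : ZMod p) (hω : ω ^ 2 = -1)
    (k0 : ℕ) (hρω : ρ = ω ^ k0)
    (hd : ∀ d : ZMod 4, ρ ^ d.val = ρ → d = 1 ∨ d = 3) :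
    ¬ IsTernaryCI (Multiplicative (ZMod p) ⋊[ψ] Multiplicative (ZMod 4)) := by
  haveI : Fact p.Prime := ⟨hp⟩
  have hp2 : (2 : ZMod p) ≠ 0 := by
    intro h
    have h2 : ((2 : ℕ) : ZMod p) = 0 := by exact_mod_cast h
    have hdv := (ZMod.natCast_eq_zero_iff 2 p).mp h2
    have := Nat.le_of_dvd (by norm_num) hdv
    omega
  have hpmod4 : ((p : ℕ) : ZMod 4) = 1 := by
    have h4 : p = 4 * (p / 4) + 1 := by omega
    calc ((p : ℕ) : ZMod 4) = ((4 * (p / 4) + 1 : ℕ) : ZMod 4) := by rw [← h4]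
    _ = 1 := by push_cast; rw [show (4 : ZMod 4) = 0 by decide]; ring
  -- the action in coordinates
  have hψpow : ∀ (n : ℕ) (x : ZMod p),
      ψ ((ofAdd (1 : ZMod 4)) ^ n) (ofAdd x) = ofAdd (ρ ^ n * x) := by
    intro n
    induction n with
    | zero => intro x; simp
    | succ n ih =>
      intro x
      rw [pow_succ, map_mul, MulAut.mul_apply, hψ1, ih]
      congr 1
      ring
  have hofAdd_pow : ∀ i : ZMod 4, (ofAdd (1 : ZMod 4)) ^ i.val = ofAdd i := by
    intro i
    rw [← ofAdd_nsmul]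
    congr 1
    rw [nsmul_eq_mul, mul_one, ZMod.natCast_val, ZMod.cast_id]
  have hψi : ∀ (i : ZMod 4) (x : ZMod p), ψ (ofAdd i) (ofAdd x) = ofAdd (ρ ^ i.val * x) := by
    intro i x
    rw [← hofAdd_pow i]
    exact hψpow i.val x
  -- the coordinate bijection
  set β : (Multiplicative (ZMod p) ⋊[ψ] Multiplicative (ZMod 4)) ≃ ZMod 4 × ZMod p := {
    toFun := fun g => (toAdd g.right, toAdd g.left)
    invFun := fun y => ⟨ofAdd y.2, ofAdd y.1⟩
    left_inv := fun g => SemidirectProduct.ext rfl rfl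
    right_inv := fun y => Prod.ext rfl rfl } with hβdef
  -- H1
  have H1 : ∀ g : Multiplicative (ZMod p) ⋊[ψ] Multiplicative (ZMod 4), ∃ (a : ZMod 4) (k : ℕ) (c : ZMod p),
      ∀ y : ZMod 4 × ZMod p, β (g * β.symm y) = (y.1 + a, ω ^ k * y.2 + c) := by
    intro g
    refine ⟨toAdd g.right, k0 * (toAdd g.right).val, toAdd g.left, ?_⟩
    intro y
    have hψg : ψ g.right (ofAdd y.2) = ofAdd (ρ ^ (toAdd g.right).val * y.2) :=
      hψi (toAdd g.right) y.2
    have h1 : β (g * β.symm y) = (toAdd (g.right * ofAdd y.1),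
        toAdd (g.left * ψ g.right (ofAdd y.2))) := rfl
    rw [h1, hψg]
    refine Prod.ext ?_ ?_
    · show toAdd g.right + y.1 = y.1 + toAdd g.right
      ring
    · show toAdd g.left + ρ ^ (toAdd g.right).val * y.2 = ω ^ (k0 * (toAdd g.right).val) * y.2 + toAdd g.left
      rw [pow_mul, ← hρω]
      ring
  -- H2
  have H2 : ∀ φG : (Multiplicative (ZMod p) ⋊[ψ] Multiplicative (ZMod 4)) ≃* (Multiplicative (ZMod p) ⋊[ψ] Multiplicative (ZMod 4)), ∃ (u : ZMod 4) (m : ZMod p) (w : ZMod 4 → ZMod p),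
      (u = 1 ∨ u = 3) ∧ m ≠ 0 ∧
      ∀ y : ZMod 4 × ZMod p, β (φG (β.symm y)) = (u * y.1, m * y.2 + w y.1) := by
    intro φG
    -- Step A: φG maps inl to inl
    have hright1 : ∀ x : ZMod p, (φG (inl (ofAdd x))).right = 1 := by
      intro x
      have hxp : (inl (ofAdd x) : Multiplicative (ZMod p) ⋊[ψ] Multiplicative (ZMod 4)) ^ p = 1 := by
        rw [← map_pow, ← ofAdd_nsmul, nsmul_eq_mul, ZMod.natCast_self, zero_mul]
        simp
      have h1 : ((φG (inl (ofAdd x))).right) ^ p = 1 := by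
        have := congrArg (fun z => (rightHom (φG z))) hxp
        simpa [map_pow] using this
      have h2 : (p : ℕ) • toAdd ((φG (inl (ofAdd x))).right) = 0 := by
        rw [← toAdd_pow, h1]
        rfl
      rw [nsmul_eq_mul, hpmod4, one_mul] at h2
      have : (φG (inl (ofAdd x))).right = ofAdd 0 := by
        rw [← h2]
        rfl
      simpa using this
    set f : ZMod p → ZMod p := fun x => toAdd ((φG (inl (ofAdd x))).left) with hfdef
    have hfadd : ∀ x y, f (x + y) = f x + f y := by
      intro x y
      have h1 : (inl (ofAdd (x + y)) : Multiplicative (ZMod p) ⋊[ψ] Multiplicative (ZMod 4)) = inl (ofAdd x) * inl (ofAdd y) := by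
        rw [← map_mul, ← ofAdd_add]
      have h2 : φG (inl (ofAdd (x+y))) = φG (inl (ofAdd x)) * φG (inl (ofAdd y)) := by
        rw [h1, map_mul]
      have h3 : (φG (inl (ofAdd (x+y)))).left
          = (φG (inl (ofAdd x))).left * ψ (φG (inl (ofAdd x))).right (φG (inl (ofAdd y))).left := by
        rw [h2]; exact SemidirectProduct.mul_left _ _
      rw [hright1] at h3
      simp only [map_one, MulAut.one_apply] at h3
      show toAdd ((φG (inl (ofAdd (x+y)))).left) = _
      rw [h3, toAdd_mul]
    set m : ZMod p := f 1 with hmdef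
    have hf0 : f 0 = 0 := by
      have : (inl (ofAdd (0 : ZMod p)) : Multiplicative (ZMod p) ⋊[ψ] Multiplicative (ZMod 4)) = 1 := by simp
      show toAdd ((φG (inl (ofAdd (0:ZMod p)))).left) = 0
      rw [this, map_one]
      rfl
    have hfn : ∀ n : ℕ, f ((n : ZMod p)) = m * n := by
      intro n
      induction n with
      | zero => simpa using hf0
      | succ n ih =>
        push_cast
        rw [hfadd, ih]
        ring
    have hfx : ∀ x : ZMod p, f x = m * x := by
      intro x
      have hxval : ((x.val : ℕ) : ZMod p) = x := by rw [ZMod.natCast_val, ZMod.cast_id]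
      rw [← hxval, hfn]
    have hφinl : ∀ x : ZMod p, φG (inl (ofAdd x)) = inl (ofAdd (m * x)) := by
      intro x
      refine SemidirectProduct.ext ?_ ?_
      · show (φG (inl (ofAdd x))).left = ofAdd (m * x)
        rw [← hfx x]
        rfl
      · rw [hright1]
        rfl
    have hm0 : m ≠ 0 := by
      intro h
      have h1 : φG (inl (ofAdd (1 : ZMod p))) = 1 := by
        rw [hφinl, h, zero_mul]
        simp
      have h2 : (inl (ofAdd (1 : ZMod p)) : Multiplicative (ZMod p) ⋊[ψ] Multiplicative (ZMod 4)) = 1 :=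
        φG.injective (by rw [h1, map_one])
      have h3 : (ofAdd (1 : ZMod p)) = 1 := by
        have := congrArg SemidirectProduct.left h2
        simpa using this
      have h4 : (1 : ZMod p) = 0 := by
        have := congrArg toAdd h3
        simpa using this
      exact one_ne_zero h4
    -- conjugation in G
    have conj : ∀ (g : Multiplicative (ZMod p) ⋊[ψ] Multiplicative (ZMod 4)) (z : Multiplicative (ZMod p)),
        g * inl z * g⁻¹ = inl (ψ g.right z) := by
      intro g z
      refine SemidirectProduct.ext ?_ ?_
      · show (g * inl z * g⁻¹).left = ψ g.right z
        rw [SemidirectProduct.mul_left, SemidirectProduct.mul_left]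
        simp only [SemidirectProduct.left_inl, SemidirectProduct.right_inl,
          SemidirectProduct.inv_left, SemidirectProduct.mul_right, mul_one]
        rw [← MulAut.mul_apply, ← map_mul, mul_inv_cancel, map_one, MulAut.one_apply]
        show g.left * ψ g.right z * g.left⁻¹ = ψ g.right z
        rw [mul_comm g.left (ψ g.right z), mul_assoc, mul_inv_cancel, mul_one]
      · simp [SemidirectProduct.mul_right]
    -- the image of inr (ofAdd 1)
    set d0 : ZMod 4 := toAdd ((φG (inr (ofAdd (1 : ZMod 4)))).right) with hd0def
    have hrel : ∀ x : ZMod p,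
        φG (inl (ψ (ofAdd (1:ZMod 4)) (ofAdd x))) =
          φG (inr (ofAdd (1:ZMod 4))) * φG (inl (ofAdd x)) * (φG (inr (ofAdd (1:ZMod 4))))⁻¹ := by
      intro x
      rw [SemidirectProduct.inl_aut]
      simp [map_mul, map_inv]
    have hkey : ρ ^ d0.val = ρ := by
      have h1 := hrel 1
      rw [hψ1, hφinl, hφinl, conj] at h1
      have h2 : (ψ ((φG (inr (ofAdd (1:ZMod 4)))).right)) (ofAdd (m * 1)) = ofAdd (m * (ρ * 1)) := by
        exact (SemidirectProduct.inl_injective h1).symm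
      have h3 : (φG (inr (ofAdd (1:ZMod 4)))).right = ofAdd d0 := rfl
      rw [h3, hψi] at h2
      have h4 : ρ ^ d0.val * (m * 1) = m * (ρ * 1) := by
        have := congrArg toAdd h2
        simpa using this
      have h5 : m * (ρ ^ d0.val) = m * ρ := by
        rw [mul_one] at h4
        rw [mul_one] at h4
        linear_combination h4
      exact mul_left_cancel₀ hm0 h5
    have hu13 : d0 = 1 ∨ d0 = 3 := hd d0 hkey
    -- right components of images of inr
    have hrightpow : ∀ i : ZMod 4, (φG (inr (ofAdd i))).right = ofAdd (i * d0) := by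
      intro i
      have h1 : (inr (ofAdd i) : Multiplicative (ZMod p) ⋊[ψ] Multiplicative (ZMod 4)) = (inr (ofAdd (1:ZMod 4))) ^ i.val := by
        rw [← map_pow, hofAdd_pow]
      have h2 : (φG (inr (ofAdd i))).right = ((φG (inr (ofAdd (1:ZMod 4)))).right) ^ i.val := by
        rw [h1, map_pow]
        exact map_pow SemidirectProduct.rightHom (φG (inr (ofAdd (1:ZMod 4)))) i.val
      rw [h2]
      have h3 : ((φG (inr (ofAdd (1:ZMod 4)))).right) = ofAdd d0 := rfl
      rw [h3, ← ofAdd_nsmul]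
      congr 1
      rw [nsmul_eq_mul, ZMod.natCast_val, ZMod.cast_id]
    set w : ZMod 4 → ZMod p := fun i => toAdd ((φG (inr (ofAdd i))).left) with hwdef
    refine ⟨d0, m, w, hu13, hm0, ?_⟩
    intro y
    have hsplit : (β.symm y : Multiplicative (ZMod p) ⋊[ψ] Multiplicative (ZMod 4)) = inl (ofAdd y.2) * inr (ofAdd y.1) := by
      refine SemidirectProduct.ext ?_ ?_
      · show ofAdd y.2 = (inl (ofAdd y.2) * inr (ofAdd y.1) : Multiplicative (ZMod p) ⋊[ψ] Multiplicative (ZMod 4)).left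
        rw [SemidirectProduct.mul_left]
        simp
      · show ofAdd y.1 = (inl (ofAdd y.2) * inr (ofAdd y.1) : Multiplicative (ZMod p) ⋊[ψ] Multiplicative (ZMod 4)).right
        rw [SemidirectProduct.mul_right]
        simp
    rw [hsplit, map_mul, hφinl]
    set Q := φG (inr (ofAdd y.1)) with hQdef
    have hQr : Q.right = ofAdd (y.1 * d0) := hrightpow y.1
    have hfinal : β (inl (ofAdd (m * y.2)) * Q) = (y.1 * d0, m * y.2 + w y.1) := by
      have hr : (inl (ofAdd (m * y.2)) * Q).right = Q.right := by
        rw [SemidirectProduct.mul_right]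
        simp
      have hl : (inl (ofAdd (m * y.2)) * Q).left = ofAdd (m * y.2) * Q.left := by
        rw [SemidirectProduct.mul_left]
        simp
      show (toAdd (inl (ofAdd (m * y.2)) * Q).right, toAdd (inl (ofAdd (m * y.2)) * Q).left) = _
      rw [hr, hl, hQr, toAdd_mul]
      rfl
    rw [hfinal]
    refine Prod.ext ?_ ?_
    · show y.1 * d0 = d0 * y.1
      ring
    · rfl
  exact master p hp2 ω hω β H1 H2

open Multiplicative in
theorem case2 (p : ℕ) (hp : p.Prime) (hp5 : 5 < p) (hmod : p % 4 = 1)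
    (ω : (ZMod p)ˣ) (hord : orderOf ω = 4)
    (ψ : Multiplicative (ZMod 4) →* MulAut (Multiplicative (ZMod p)))
    (hψ : ∀ x : ZMod p, ψ (ofAdd (1 : ZMod 4)) (ofAdd x) = ofAdd ((ω : ZMod p) * x)) :
    ¬ IsTernaryCI (Multiplicative (ZMod p) ⋊[ψ] Multiplicative (ZMod 4)) := by
  haveI : Fact p.Prime := ⟨hp⟩
  have hp2 : (2 : ZMod p) ≠ 0 := by
    intro h
    have h2 : ((2 : ℕ) : ZMod p) = 0 := by exact_mod_cast h
    have hdv := (ZMod.natCast_eq_zero_iff 2 p).mp h2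
    have := Nat.le_of_dvd (by norm_num) hdv
    omega
  set ρ : ZMod p := (ω : ZMod p) with hρdef
  have h4 : ρ ^ 4 = 1 := by
    have h1 : (ω ^ 4 : (ZMod p)ˣ) = 1 := by rw [← hord]; exact pow_orderOf_eq_one ω
    calc ρ ^ 4 = ((ω ^ 4 : (ZMod p)ˣ) : ZMod p) := by push_cast; rfl
    _ = 1 := by rw [h1]; rfl
  have h2ne : ρ ^ 2 ≠ 1 := by
    intro h
    have h1 : (ω ^ 2 : (ZMod p)ˣ) = 1 := by
      ext
      push_cast
      exact h
    have hdvd := orderOf_dvd_iff_pow_eq_one.mpr h1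
    rw [hord] at hdvd
    norm_num at hdvd
  have hω : ρ ^ 2 = -1 := by
    have hsq : (ρ ^ 2) * (ρ ^ 2) = 1 := by
      calc (ρ ^ 2) * (ρ ^ 2) = ρ ^ 4 := by ring
      _ = 1 := h4
    rcases mul_self_eq_one_iff.mp hsq with h | h
    · exact absurd h h2ne
    · exact h
  have hd : ∀ d : ZMod 4, ρ ^ d.val = ρ → d = 1 ∨ d = 3 := by
    intro d hdd
    have hv : d.val < 4 := ZMod.val_lt d
    have hdval : ((d.val : ℕ) : ZMod 4) = d := by rw [ZMod.natCast_val, ZMod.cast_id]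
    rcases (by omega : d.val = 0 ∨ d.val = 1 ∨ d.val = 2 ∨ d.val = 3) with h0 | h1 | h2 | h3
    · rw [h0, pow_zero] at hdd
      exact absurd (by linear_combination (ρ + 1) * hdd + hω) hp2
    · left; rw [← hdval, h1]; norm_num
    · rw [h2] at hdd
      exact absurd (by linear_combination (ρ - 1) * hdd + (2 - ρ) * hω) hp2
    · right; rw [← hdval, h3]; norm_num
  exact caseSemi p hp hp5 hmod ψ ρ hψ ρ hω 1 (pow_one ρ).symm hd

open Multiplicative in
theorem case3 (p : ℕ) (hp : p.Prime) (hp5 : 5 < p) (hmod : p % 4 = 1)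
    (ψ : Multiplicative (ZMod 4) →* MulAut (Multiplicative (ZMod p)))
    (hψ : ∀ x : Multiplicative (ZMod p), ψ (ofAdd (1 : ZMod 4)) x = x⁻¹) :
    ¬ IsTernaryCI (Multiplicative (ZMod p) ⋊[ψ] Multiplicative (ZMod 4)) := by
  haveI : Fact p.Prime := ⟨hp⟩
  have hp2 : (2 : ZMod p) ≠ 0 := by
    intro h
    have h2 : ((2 : ℕ) : ZMod p) = 0 := by exact_mod_cast h
    have hdv := (ZMod.natCast_eq_zero_iff 2 p).mp h2
    have := Nat.le_of_dvd (by norm_num) hdv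
    omega
  obtain ⟨ω, hω⟩ : ∃ ω : ZMod p, ω ^ 2 = -1 := by
    obtain ⟨r, hr⟩ := (ZMod.exists_sq_eq_neg_one_iff (p := p)).mpr (by omega)
    exact ⟨r, by rw [sq]; exact hr.symm⟩
  have hψ1 : ∀ x : ZMod p, ψ (ofAdd (1 : ZMod 4)) (ofAdd x) = ofAdd ((-1 : ZMod p) * x) := by
    intro x
    rw [hψ, ← ofAdd_neg]
    congr 1
    ring
  have hd : ∀ d : ZMod 4, (-1 : ZMod p) ^ d.val = -1 → d = 1 ∨ d = 3 := by
    intro d hdd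
    have hv : d.val < 4 := ZMod.val_lt d
    have hdval : ((d.val : ℕ) : ZMod 4) = d := by rw [ZMod.natCast_val, ZMod.cast_id]
    rcases (by omega : d.val = 0 ∨ d.val = 1 ∨ d.val = 2 ∨ d.val = 3) with h0 | h1 | h2 | h3
    · rw [h0, pow_zero] at hdd
      exact absurd (by linear_combination hdd) hp2
    · left; rw [← hdval, h1]; norm_num
    · rw [h2] at hdd
      norm_num at hdd
      exact absurd (by linear_combination hdd) hp2
    · right; rw [← hdval, h3]; norm_num
  exact caseSemi p hp hp5 hmod ψ (-1 : ZMod p) hψ1 ω hω 2 hω.symm hd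


/-- Corollary 7.5: for a prime `p > 5` with `p ≡ 1 (mod 4)`, none of
`Z_{4p}`, the Frobenius group of order `4p`, and the dicyclic group of order `4p` is a
CI-group with respect to ternary relational structures. -/
theorem statement19 (p : ℕ) (hp : p.Prime) (hp5 : 5 < p) (hmod : p % 4 = 1) :
    ¬ IsTernaryCI (Multiplicative (ZMod (4 * p))) ∧
    (∀ ω : (ZMod p)ˣ, orderOf ω = 4 →
      ∀ ψ : Multiplicative (ZMod 4) →* MulAut (Multiplicative (ZMod p)),
        (∀ x : ZMod p, ψ (Multiplicative.ofAdd (1 : ZMod 4)) (Multiplicative.ofAdd x) =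
          Multiplicative.ofAdd ((ω : ZMod p) * x)) →
        ¬ IsTernaryCI (Multiplicative (ZMod p) ⋊[ψ] Multiplicative (ZMod 4))) ∧
    (∀ ψ : Multiplicative (ZMod 4) →* MulAut (Multiplicative (ZMod p)),
      (∀ x : Multiplicative (ZMod p), ψ (Multiplicative.ofAdd (1 : ZMod 4)) x = x⁻¹) →
      ¬ IsTernaryCI (Multiplicative (ZMod p) ⋊[ψ] Multiplicative (ZMod 4))) := by
  refine ⟨case1 p hp hp5 hmod, ?_, ?_⟩
  · intro ω hord ψ hψ
    exact case2 p hp hp5 hmod ω hord ψ hψ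
  · intro ψ hψ
    exact case3 p hp hp5 hmod ψ hψ
end
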